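/- arXiv:1904.01394 — 2 statements merged into one kernel-verified Lean document; each statement's English description precedes it below -/
import Mathlib

section
/- Let G be a graph with vertex degrees d_1 ≤ d_2 ≤ … ≤ d_n, n ≥ 3. If G has no Hamiltonian cycle, then there exists an index i with 1 ≤ i < n/2 such that d_i ≤ i and d_{n-i} ≤ n - i - 1. -/
/-!
Enlarge `G` to a maximal non-Hamiltonian graph `H` on the same vertices; degrees only grow, so
it suffices to find the index for `H`. Since `H` is not complete, pick non-adjacent `s, t` with
`d(s) ≤ d(t)` and `d(s) + d(t)` maximal. As `H + st` is Hamiltonian, `H` has a Hamiltonian path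
`s = v₀, …, v_{n-1} = t`, and no `i` has `s ~ v_{i+1}` and `v_i ~ t` (that would close a
Hamiltonian cycle), so `d(s) + d(t) ≤ n - 1`. Put `k = d(s)`: the at least `n - 1 - d(t) ≥ k`
non-neighbours of `t` have degree `≤ k`, while `s` and its `n - 1 - k` non-neighbours have degree
`≤ d(t) ≤ n - 1 - k`. In the sorted sequence this says `d_k ≤ k` and `d_{n-k} ≤ n - k - 1`.
-/

open Finset

lemma List.Nodup.head_ne_getLast {α : Type*} {l : List α} {a b : α} (hl : l.Nodup)
    (h2 : 2 ≤ l.length) (ha : l.head? = some a) (hb : l.getLast? = some b) : a ≠ b := by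
  rintro rfl
  obtain ⟨_, ha⟩ := List.getElem?_eq_some_iff.1 (List.head?_eq_getElem? ▸ ha)
  obtain ⟨_, hb⟩ := List.getElem?_eq_some_iff.1 (List.getLast?_eq_getElem? ▸ hb)
  have := (hl.getElem_inj_iff (i := 0) (j := l.length - 1)).1 (ha.trans hb.symm)
  omega

lemma Monotone.le_of_lt_card_filter {α : Type*} [LinearOrder α] {n : ℕ} {d : Fin n → α}
    (hd : Monotone d) {m : α} {j : Fin n} (hj : (j : ℕ) < #{i | d i ≤ m}) : d j ≤ m := by
  by_contra! h
  have hsub : ({i | d i ≤ m} : Finset (Fin n)) ⊆ Iio j := fun i hi => by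
    simp only [mem_filter, mem_univ, true_and, mem_Iio] at hi ⊢
    by_contra! hji
    exact (h.trans_le (hd hji)).not_ge hi
  have := card_le_card hsub
  simp only [Fin.card_Iio] at this
  omega

namespace SimpleGraph

variable {V : Type*} {H : SimpleGraph V}

lemma Walk.head?_support {u v : V} (p : H.Walk u v) : p.support.head? = some u := by
  cases p <;> rfl

lemma Walk.getLast?_support {u v : V} (p : H.Walk u v) : p.support.getLast? = some v := by
  rw [List.getLast?_eq_some_getLast (by simp), Walk.getLast_support]

lemma isChain_of_isChain_sup_edge {s t : V} {l : List V} (h : l.IsChain (H ⊔ edge s t).Adj)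
    (hs : s ∉ l) : l.IsChain H.Adj :=
  (List.IsChain.iff_mem.1 h).imp fun a b ⟨ha, hb, hab⟩ => by
    have : a ≠ s ∧ b ≠ s := ⟨fun h => hs (h ▸ ha), fun h => hs (h ▸ hb)⟩
    simpa [edge_adj, this] using hab

variable [DecidableEq V]

lemma Walk.isHamiltonian_ofSupport {l : List V} (hne : l ≠ []) (hch : l.IsChain H.Adj)
    (hnd : l.Nodup) (hall : ∀ v, v ∈ l) : (Walk.ofSupport l hne hch).IsHamiltonian :=
  fun v => by
    rw [Walk.support_ofSupport]
    exact List.count_eq_one_of_mem hnd (hall v)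

lemma exists_isHamiltonian_walk_of_isChain {l : List V} (hch : l.IsChain H.Adj) (hnd : l.Nodup)
    (hall : ∀ v, v ∈ l) {x y : V} (hx : l.head? = some x) (hy : l.getLast? = some y) :
    ∃ p : H.Walk x y, p.IsHamiltonian := by
  have hne : l ≠ [] := by rintro rfl; simp at hx
  obtain rfl : l.head hne = x := by simpa [List.head?_eq_some_head hne] using hx
  obtain rfl : l.getLast hne = y := by simpa [List.getLast?_eq_some_getLast hne] using hy
  exact ⟨_, Walk.isHamiltonian_ofSupport hne hch hnd hall⟩

variable [Fintype V]

lemma Walk.IsHamiltonian.isHamiltonian_of_adj {u v : V} {p : H.Walk u v} (hp : p.IsHamiltonian)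
    (hvu : H.Adj v u) (h3 : 3 ≤ Fintype.card V) : H.IsHamiltonian := fun _ => by
  refine ⟨v, .cons hvu p, ?_⟩
  rw [Walk.isHamiltonianCycle_iff_isCycle_and_length_eq,
    Walk.isCycle_iff_isPath_tail_and_le_length]
  simp [hp.isPath, hp.length_eq]
  omega

lemma isHamiltonian_of_isChain {l : List V} (hch : l.IsChain H.Adj) (hnd : l.Nodup)
    (hall : ∀ v, v ∈ l) {x y : V} (hx : l.head? = some x) (hy : l.getLast? = some y)
    (hyx : H.Adj y x) (h3 : 3 ≤ Fintype.card V) : H.IsHamiltonian :=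
  let ⟨_, hp⟩ := exists_isHamiltonian_walk_of_isChain hch hnd hall hx hy
  hp.isHamiltonian_of_adj hyx h3

lemma isHamiltonian_top (h3 : 3 ≤ Fintype.card V) : (⊤ : SimpleGraph V).IsHamiltonian := by
  have hnd := (univ : Finset V).nodup_toList
  have hlen : (univ : Finset V).toList.length = Fintype.card V := by simp
  have hne : (univ : Finset V).toList ≠ [] := by rw [← List.length_pos_iff]; omega
  exact isHamiltonian_of_isChain (hnd.imp fun h => h).isChain hnd (by simp)
    (List.head?_eq_some_head hne) (List.getLast?_eq_some_getLast hne)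
    (List.Nodup.head_ne_getLast hnd (by omega) (List.head?_eq_some_head hne)
      (List.getLast?_eq_some_getLast hne)).symm h3

/-- The Hamiltonian cycle is `u, …, p[i], v, …, p[i+1], u`. -/
lemma Walk.IsHamiltonian.isHamiltonian_of_crossing {u v : V} {p : H.Walk u v}
    (hp : p.IsHamiltonian) {i : ℕ} (hi : i + 1 < p.support.length)
    (hu : H.Adj u p.support[i + 1]) (hv : H.Adj p.support[i] v) (h3 : 3 ≤ Fintype.card V) :
    H.IsHamiltonian := by
  have hperm : (p.support.take (i + 1) ++ (p.support.drop (i + 1)).reverse).Perm p.support := by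
    conv_rhs => rw [← List.take_append_drop (i + 1) p.support]
    exact (List.perm_append_left_iff _).2 (List.reverse_perm _)
  have hch := p.isChain_adj_support
  refine isHamiltonian_of_isChain (x := u) (y := p.support[i + 1]) ?_
    (hperm.nodup_iff.2 hp.isPath.support_nodup) (fun w => hperm.mem_iff.2 (hp.mem_support w))
    ?_ ?_ hu.symm h3
  · refine List.isChain_append.2 ⟨hch.take _, List.isChain_reverse.2 ?_, ?_⟩
    · exact (hch.drop _).imp fun _ _ h => h.symm
    · simpa [List.getLast?_drop, show ¬ p.support.length ≤ i + 1 by omega, p.getLast?_support,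
        List.getLast?_take, List.getElem?_eq_getElem (show i < p.support.length by omega)]
        using fun _ => hv
  · simpa [List.head?_take] using p.head?_support
  · simp

/-- The positions `i` with `u ~ p[i+1]` and those with `p[i] ~ v` are disjoint subsets of
`[0, p.length)` by `isHamiltonian_of_crossing`, and there are `d(u)` and `d(v)` of them. -/
lemma Walk.IsHamiltonian.degree_add_degree_lt [DecidableRel H.Adj] {u v : V} {p : H.Walk u v}
    (hp : p.IsHamiltonian) (hH : ¬ H.IsHamiltonian) (h3 : 3 ≤ Fintype.card V) :
    H.degree u + H.degree v < Fintype.card V := by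
  set e := hp.supportGetEquiv
  have he : ∀ w, p.support[(e.symm w : ℕ)] = w := e.apply_symm_apply
  have hidx : ∀ {w z}, (e.symm w : ℕ) = e.symm z → w = z :=
    fun h => e.symm.injective (Fin.ext h)
  have hu : (e.symm u : ℕ) = 0 :=
    congrArg Fin.val (e.symm_apply_eq.2 p.support_getElem_zero.symm : e.symm u = ⟨0, by simp⟩)
  have hv : (e.symm v : ℕ) = p.length := congrArg Fin.val
    (e.symm_apply_eq.2 p.support_getElem_length.symm : e.symm v = ⟨p.length, by simp⟩)
  have hlt : ∀ w, (e.symm w : ℕ) ≤ p.length :=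
    fun w => Nat.lt_succ_iff.1 (by simpa using (e.symm w).2)
  have hnu : ∀ w ∈ H.neighborFinset u, (e.symm w : ℕ) ≠ 0 := fun w hw h =>
    H.irrefl (hidx (h.trans hu.symm) ▸ (H.mem_neighborFinset u w).1 hw)
  have hnv : ∀ w ∈ H.neighborFinset v, (e.symm w : ℕ) ≠ p.length := fun w hw h =>
    H.irrefl (hidx (h.trans hv.symm) ▸ (H.mem_neighborFinset v w).1 hw)
  set A := (H.neighborFinset u).image (fun w => (e.symm w : ℕ) - 1)
  set B := (H.neighborFinset v).image (fun w => (e.symm w : ℕ))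
  have hA : #A = H.degree u :=
    card_image_of_injOn fun w hw z hz h => hidx (by have := hnu w hw; have := hnu z hz; omega)
  have hB : #B = H.degree v := card_image_of_injOn fun w _ z _ h => hidx h
  have hdisj : Disjoint A B := by
    refine Finset.disjoint_left.2 fun j hjA hjB => hH ?_
    obtain ⟨w, hw, rfl⟩ := mem_image.1 hjA
    obtain ⟨z, hz, hzj⟩ := mem_image.1 hjB
    have hzw : (e.symm z : ℕ) + 1 = e.symm w := by have := hnu w hw; omega
    refine hp.isHamiltonian_of_crossing (i := e.symm z)
      (by have := hnv z hz; have := hlt z; simp; omega) ?_ ?_ h3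
    · simpa [hzw, he] using (H.mem_neighborFinset u w).1 hw
    · simpa [he] using ((H.mem_neighborFinset v z).1 hz).symm
  have hsub : A ∪ B ⊆ range p.length := by
    intro j hj
    rcases mem_union.1 hj with hj | hj <;> obtain ⟨w, hw, rfl⟩ := mem_image.1 hj
    · have := hnu w hw; have := hlt w; simp; omega
    · have := hnv w hw; have := hlt w; simp; omega
  calc H.degree u + H.degree v = #(A ∪ B) := by rw [card_union_of_disjoint hdisj, hA, hB]
    _ ≤ p.length := by simpa using card_le_card hsub
    _ < Fintype.card V := by rw [hp.length_eq]; omega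

lemma Walk.IsHamiltonianCycle.exists_support_eq_cons_append {s : V} {c : H.Walk s s}
    (hc : c.IsHamiltonianCycle) : ∃ r : List V, c.support = s :: (r ++ [s]) ∧
      (r ++ [s]).Nodup ∧ (∀ v, v ∈ r ++ [s]) ∧ r.length + 1 = Fintype.card V := by
  have htail := Walk.support_tail_of_not_nil c hc.not_nil
  have hT : c.tail.support.dropLast ++ [s] = c.tail.support := Walk.dropLast_support_concat _
  refine ⟨c.tail.support.dropLast, ?_, ?_, ?_, ?_⟩
  · rw [hT, htail, Walk.cons_tail_support]
  · rw [hT, htail]; exact hc.isCycle.support_nodup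
  · rw [hT]; exact hc.isHamiltonian_tail.mem_support
  · rw [← hc.isHamiltonian_tail.length_support]
    conv_rhs => rw [← hT]
    simp

/-- The added edge `st` must be one of the two edges of the cycle `s :: r ++ [s]` at `s`, since
otherwise the cycle lies in `H`. -/
lemma exists_isHamiltonian_walk_of_isChain_sup_edge {s t : V} {r : List V}
    (hch : (s :: (r ++ [s])).IsChain (H ⊔ edge s t).Adj) (hnd : (r ++ [s]).Nodup)
    (hall : ∀ v, v ∈ r ++ [s]) (hr : 2 ≤ r.length) (hH : ¬ H.IsHamiltonian)
    (h3 : 3 ≤ Fintype.card V) : ∃ p : H.Walk s t, p.IsHamiltonian := by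
  have hperm := List.perm_append_singleton s r
  obtain ⟨hs, hrnd⟩ : s ∉ r ∧ r.Nodup := List.nodup_cons.1 (hperm.nodup_iff.1 hnd)
  have hall' : ∀ v, v ∈ s :: r := fun v => hperm.mem_iff.1 (hall v)
  have hne : r ≠ [] := by rintro rfl; simp at hr
  obtain ⟨a, ha⟩ : ∃ a, r.head? = some a := ⟨_, List.head?_eq_some_head hne⟩
  obtain ⟨b, hb⟩ : ∃ b, r.getLast? = some b := ⟨_, List.getLast?_eq_some_getLast hne⟩
  have hab := List.Nodup.head_ne_getLast hrnd hr ha hb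
  obtain ⟨hsa, hrch', hbs⟩ : (H ⊔ edge s t).Adj s a ∧ r.IsChain (H ⊔ edge s t).Adj ∧
      (H ⊔ edge s t).Adj b s := by
    simpa [List.isChain_cons, List.isChain_append, List.head?_append, ha, hb] using hch
  have hrch := isChain_of_isChain_sup_edge hrch' hs
  have ha_ne : a ≠ s := fun h => hs (h ▸ List.mem_of_mem_head? ha)
  have hb_ne : b ≠ s := fun h => hs (h ▸ List.mem_of_getLast? hb)
  have hsaH : a ≠ t → H.Adj s a := fun h => by simpa [edge_adj, h, ha_ne] using hsa
  have hbsH : b ≠ t → H.Adj b s := fun h => by simpa [edge_adj, h, hb_ne] using hbs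
  by_cases hbt : b = t
  · refine exists_isHamiltonian_walk_of_isChain (l := s :: r) ?_ (List.nodup_cons.2 ⟨hs, hrnd⟩)
      hall' rfl (by simp [List.getLast?_cons, hb, hbt])
    exact List.isChain_cons.2 ⟨by simpa [ha] using hsaH (hbt ▸ hab), hrch⟩
  by_cases hat : a = t
  · refine exists_isHamiltonian_walk_of_isChain (l := s :: r.reverse) ?_
      (List.nodup_cons.2 ⟨by simpa using hs, List.nodup_reverse.2 hrnd⟩) (by simpa using hall')
      rfl (by simp [List.getLast?_cons, ha, hat])
    exact List.isChain_cons.2 ⟨by simpa [hb] using (hbsH hbt).symm,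
      List.isChain_reverse.2 (hrch.imp fun _ _ h => h.symm)⟩
  refine absurd (isHamiltonian_of_isChain (l := s :: r) ?_ (List.nodup_cons.2 ⟨hs, hrnd⟩)
    hall' rfl (by simp [List.getLast?_cons, hb]) (hbsH hbt) h3) hH
  exact List.isChain_cons.2 ⟨by simpa [ha] using hsaH hat, hrch⟩

lemma exists_isHamiltonian_walk_of_isHamiltonian_sup_edge {s t : V} (hH : ¬ H.IsHamiltonian)
    (hH' : (H ⊔ edge s t).IsHamiltonian) (h3 : 3 ≤ Fintype.card V) :
    ∃ p : H.Walk s t, p.IsHamiltonian := by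
  obtain ⟨_, c, hc⟩ := hH' (by omega)
  obtain ⟨r, hsupp, hnd, hall, hlen⟩ :=
    (hc.rotate (hc.mem_support s)).exists_support_eq_cons_append
  exact exists_isHamiltonian_walk_of_isChain_sup_edge
    (hsupp ▸ (c.rotate s _).isChain_adj_support) hnd hall (by omega) hH h3

lemma exists_compl_adj_forall_degree_add_le [DecidableRel H.Adj] (hH : H ≠ ⊤) :
    ∃ s t, Hᶜ.Adj s t ∧ H.degree s ≤ H.degree t ∧
      ∀ u v, Hᶜ.Adj u v → H.degree u + H.degree v ≤ H.degree s + H.degree t := by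
  obtain ⟨u, v, huv⟩ : ∃ u v, Hᶜ.Adj u v := by
    by_contra! h
    refine hH (SimpleGraph.ext (funext₂ fun u v => propext ⟨fun h => h.ne, fun huv => ?_⟩))
    simpa [huv.ne] using h u v
  obtain ⟨⟨s, t⟩, hst, hmax⟩ := exists_max_image ({p | Hᶜ.Adj p.1 p.2} : Finset (V × V))
    (fun p => H.degree p.1 + H.degree p.2) ⟨(u, v), by simpa using huv⟩
  simp only [mem_filter, mem_univ, true_and, Prod.forall] at hst hmax
  rcases le_total (H.degree s) (H.degree t) with h | h
  · exact ⟨s, t, hst, h, hmax⟩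
  · exact ⟨t, s, hst.symm, h, fun u v huv => (hmax u v huv).trans (add_comm ..).le⟩

lemma card_sub_one_sub_degree_le_card_filter [DecidableRel H.Adj] {v : V} {m : ℕ}
    (h : ∀ w, Hᶜ.Adj v w → H.degree w ≤ m) :
    Fintype.card V - 1 - H.degree v ≤ #{w | H.degree w ≤ m} := by
  rw [← degree_compl]
  exact card_le_card fun w hw => by simpa using h w ((mem_neighborFinset _ _ _).1 hw)

lemma card_sub_degree_le_card_filter [DecidableRel H.Adj] {v : V} {m : ℕ}
    (hv : H.degree v ≤ m) (h : ∀ w, Hᶜ.Adj v w → H.degree w ≤ m) :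
    Fintype.card V - H.degree v ≤ #{w | H.degree w ≤ m} := by
  have hsub : insert v (Hᶜ.neighborFinset v) ⊆ ({w | H.degree w ≤ m} : Finset V) := by
    intro w hw
    rcases mem_insert.1 hw with rfl | hw
    · simpa using hv
    · simpa using h w ((mem_neighborFinset _ _ _).1 hw)
  have := card_le_card hsub
  rw [card_insert_of_notMem (by simp), card_neighborFinset_eq_degree, degree_compl] at this
  have := H.degree_lt_card_verts v
  omega

lemma exists_le_card_filter_degree_le_of_maximal [DecidableRel H.Adj]
    (hH : Maximal (fun K : SimpleGraph V => ¬ K.IsHamiltonian) H) (h3 : 3 ≤ Fintype.card V) :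
    ∃ k, 1 ≤ k ∧ 2 * k < Fintype.card V ∧ k ≤ #{v | H.degree v ≤ k} ∧
      Fintype.card V - k ≤ #{v | H.degree v ≤ Fintype.card V - k - 1} := by
  obtain ⟨s, t, hst, hle, hsum⟩ :=
    exists_compl_adj_forall_degree_add_le fun (h : H = ⊤) => hH.prop (h ▸ isHamiltonian_top h3)
  obtain ⟨p, hp⟩ := exists_isHamiltonian_walk_of_isHamiltonian_sup_edge hH.prop
    (not_not.1 (hH.not_prop_of_gt (lt_sup_edge _ _ _ hst.ne hst.2))) h3
  have hlt := hp.degree_add_degree_lt hH.prop h3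
  have hpos : 0 < H.degree s :=
    card_pos.2 ⟨p.snd, (mem_neighborFinset _ _ _).2 (p.adj_snd (Walk.not_nil_of_ne hst.ne))⟩
  refine ⟨H.degree s, hpos, by omega, ?_, ?_⟩
  · have := card_sub_one_sub_degree_le_card_filter (v := t) (m := H.degree s)
      fun w hw => by have := hsum w t hw.symm; omega
    omega
  · exact card_sub_degree_le_card_filter (by omega) fun w hw => by have := hsum w s hw.symm; omega

end SimpleGraph

open SimpleGraph in
theorem stmt8 {V : Type*} [Fintype V] [DecidableEq V] (G : SimpleGraph V)
    [DecidableRel G.Adj] (n : ℕ) (hn : Fintype.card V = n) (hn3 : 3 ≤ n)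
    (d : Fin n → ℕ) (hmono : Monotone d)
    (σ : Fin n ≃ V) (hd : ∀ i, d i = G.degree (σ i))
    (hham : ¬ ∃ (a : V) (p : G.Walk a a), p.IsHamiltonianCycle) :
    ∃ i : ℕ, ∃ h1 : 1 ≤ i, ∃ h2 : 2 * i < n,
      d ⟨i - 1, by omega⟩ ≤ i ∧ d ⟨n - i - 1, by omega⟩ ≤ n - i - 1 := by
  obtain ⟨H, hGH, hH⟩ := Finite.exists_le_maximal
    (p := fun K : SimpleGraph V => ¬ K.IsHamiltonian) fun h => hham (h (by omega))
  let : DecidableRel H.Adj := Classical.decRel _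
  have hcard : ∀ m, #{v | H.degree v ≤ m} ≤ #{i | d i ≤ m} := fun m => by
    rw [card_equiv σ (t := {v | G.degree v ≤ m}) fun i => by simp [hd]]
    exact card_le_card fun v hv => by
      simpa using (G.degree_le_of_le hGH).trans (by simpa using hv)
  obtain ⟨k, hk1, hk2, hlow, hhigh⟩ := exists_le_card_filter_degree_le_of_maximal hH (by omega)
  subst hn
  refine ⟨k, hk1, hk2, hmono.le_of_lt_card_filter ?_, hmono.le_of_lt_card_filter ?_⟩
  · have := hcard k; simp only; omega
  · have := hcard (Fintype.card V - k - 1); simp only; omega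
end

section
/- Let t be an odd positive integer, k = (t+1)/2, n ≥ k, and let G be obtained from K_n by choosing a set S of k vertices and deleting all edges incident to S. Then G ∗ K_t has no K_3-factor, and the number of deleted edges is exactly C(k,2) + k(n-k). -/
/-- The join `G ∗ K_t`: add `t` new vertices adjacent to everything. -/
def graphJoin {V : Type*} (G : SimpleGraph V) (t : ℕ) : SimpleGraph (V ⊕ Fin t) :=
  SimpleGraph.fromRel (fun x y =>
    (∃ a b, x = Sum.inl a ∧ y = Sum.inl b ∧ G.Adj a b) ∨ x.isRight = true ∨ y.isRight = true)

lemma choose2_add (a b : ℕ) : (a + b).choose 2 = a.choose 2 + b.choose 2 + a * b := by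
  induction b with
  | zero => simp
  | succ b ih =>
    have h1 : a + (b + 1) = (a + b) + 1 := by omega
    rw [h1, Nat.choose_succ_succ, Nat.choose_one_right, ih,
      Nat.choose_succ_succ b 1, Nat.choose_one_right]
    ring

lemma two_mul_choose2 (m : ℕ) : 2 * m.choose 2 = m * (m - 1) := by
  induction m with
  | zero => simp
  | succ m ih =>
    rw [Nat.choose_succ_succ, Nat.choose_one_right]
    simp only [Nat.add_sub_cancel]
    cases m with
    | zero => simp
    | succ m => simp at ih ⊢; nlinarith [ih]

theorem stmt18 (n t k : ℕ) (ht : Odd t) (ht1 : 1 ≤ t) (hk : k = (t + 1) / 2)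
    (hn : k ≤ n) (S : Finset (Fin n)) (hS : S.card = k)
    (G : SimpleGraph (Fin n)) [DecidableRel G.Adj]
    (hG : ∀ u v, G.Adj u v ↔ u ≠ v ∧ u ∉ S ∧ v ∉ S) :
    (¬ ∃ T : Finset (Finset (Fin n ⊕ Fin t)),
      (∀ s ∈ T, (graphJoin G t).IsNClique 3 s) ∧
      (∀ s ∈ T, ∀ s' ∈ T, s ≠ s' → Disjoint s s') ∧
      (∀ v : Fin n ⊕ Fin t, ∃ s ∈ T, v ∈ s)) ∧
    G.edgeFinset.card + (k.choose 2 + k * (n - k)) = n.choose 2 := by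
  classical
  have htk : t + 1 = 2 * k := by
    obtain ⟨m, hm⟩ := ht; omega
  constructor
  · rintro ⟨T, hclq, hdisj, hcov⟩
    -- triangle containing inl s
    have hc : ∀ s : Fin n, ∃ c ∈ T, Sum.inl s ∈ c := fun s => hcov (Sum.inl s)
    choose c hcT hcm using hc
    -- for s ∈ S, any element of c s other than inl s is a right vertex
    have hright : ∀ s ∈ S, ∀ x ∈ c s, x ≠ Sum.inl s → x.isRight = true := by
      intro s hs x hx hne
      have hadj := ((hclq (c s) (hcT s)).1 hx (hcm s) hne)
      rw [graphJoin, SimpleGraph.fromRel_adj] at hadj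
      obtain ⟨-, hrel⟩ := hadj
      rcases hrel with (⟨a, b, ha, hb, hab⟩ | h | h) | (⟨a, b, ha, hb, hab⟩ | h | h)
      · cases hb; exact absurd ((hG a s).mp hab).2.2 (by simpa using hs)
      · exact h
      · simp at h
      · cases ha; exact absurd ((hG s b).mp hab).2.1 (by simpa using hs)
      · simp at h
      · exact h
    -- right parts
    set g : Fin n → Finset (Fin t) :=
      fun s => Finset.univ.filter (fun r => Sum.inr r ∈ c s) with hg
    have hgc : ∀ s ∈ S, (g s).card = 2 := by
      intro s hs
      have hcard := (hclq (c s) (hcT s)).2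
      have hsplit : c s = insert (Sum.inl s) ((g s).image Sum.inr) := by
        ext x
        simp only [Finset.mem_insert, Finset.mem_image, hg, Finset.mem_filter,
          Finset.mem_univ, true_and]
        constructor
        · intro hx
          by_cases hxe : x = Sum.inl s
          · exact Or.inl hxe
          · right
            have := hright s hs x hx hxe
            cases x with
            | inl a => simp at this
            | inr r => exact ⟨r, hx, rfl⟩
        · rintro (rfl | ⟨r, hr, rfl⟩)
          · exact hcm s
          · exact hr
      have hninl : Sum.inl s ∉ (g s).image Sum.inr := by simp
      have hinj : ((g s).image Sum.inr).card = (g s).card :=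
        Finset.card_image_of_injective _ (Sum.inr_injective : Function.Injective (Sum.inr : Fin t → Fin n ⊕ Fin t))
      rw [hsplit, Finset.card_insert_of_notMem hninl, hinj] at hcard
      omega
    have hgdisj : ∀ s ∈ S, ∀ s' ∈ S, s ≠ s' → Disjoint (g s) (g s') := by
      intro s hs s' hs' hne
      rcases eq_or_ne (c s) (c s') with hcc | hcc
      · exfalso
        have : (Sum.inl s' : Fin n ⊕ Fin t) ∈ c s := hcc ▸ hcm s'
        have := hright s hs _ this (by simp [hne.symm])
        simp at this
      · have hd := hdisj _ (hcT s) _ (hcT s') hcc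
        rw [Finset.disjoint_left]
        intro r hr hr'
        simp only [hg, Finset.mem_filter, Finset.mem_univ, true_and] at hr hr'
        exact (Finset.disjoint_left.mp hd hr) hr'
    have hbig : (S.biUnion g).card = 2 * k := by
      rw [Finset.card_biUnion hgdisj]
      rw [Finset.sum_congr rfl hgc, Finset.sum_const, hS, smul_eq_mul]
      omega
    have hle : (S.biUnion g).card ≤ t := by
      simpa using Finset.card_le_card (Finset.subset_univ (S.biUnion g))
    omega
  · -- edge count
    have hdeg : ∀ v : Fin n, G.degree v = if v ∈ S then 0 else (n - k - 1) := by
      intro v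
      by_cases hv : v ∈ S
      · simp only [hv, if_true]
        rw [SimpleGraph.degree]
        convert Finset.card_empty
        ext u
        simp [SimpleGraph.mem_neighborFinset, hG, hv]
      · simp only [hv, if_false]
        rw [SimpleGraph.degree]
        have : G.neighborFinset v = Sᶜ.erase v := by
          ext u
          simp only [SimpleGraph.mem_neighborFinset, hG, Finset.mem_erase,
            Finset.mem_compl]
          constructor
          · rintro ⟨h1, _, h3⟩; exact ⟨h1.symm, h3⟩
          · rintro ⟨h1, h2⟩; exact ⟨Ne.symm h1, hv, h2⟩
        rw [this, Finset.card_erase_of_mem (by simpa using hv), Finset.card_compl,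
          hS, Fintype.card_fin]
    have hsum : ∑ v : Fin n, G.degree v = (n - k) * (n - k - 1) := by
      rw [Finset.sum_congr rfl (fun v _ => hdeg v)]
      have flip : ∀ v : Fin n, (if v ∈ S then 0 else n - k - 1)
          = (if v ∈ Sᶜ then n - k - 1 else 0) := by
        intro v
        by_cases hv : v ∈ S <;> simp [hv]
      rw [Finset.sum_congr rfl (fun v _ => flip v), Finset.sum_ite_mem,
        Finset.univ_inter, Finset.sum_const, Finset.card_compl, hS,
        Fintype.card_fin, smul_eq_mul]
    have hhs := SimpleGraph.sum_degrees_eq_twice_card_edges G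
    have hE : G.edgeFinset.card = (n - k).choose 2 := by
      have h2 := two_mul_choose2 (n - k)
      rw [hhs] at hsum
      omega
    have := choose2_add k (n - k)
    rw [hE]
    have hnk : k + (n - k) = n := by omega
    rw [hnk] at this
    omega
end
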